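/- Let s ≥ 1 be an integer, let t be an indeterminate, and define the polynomial P(w_1,...,w_s,z) = Σ_{k=0}^{s} (-1)^k [s choose k]_t (w_1 - t^{1-s}z)···(w_k - t^{1-s}z)·(w_{k+1}t^{1-s} - z)···(w_s t^{1-s} - z) in ℚ(t)[w_1,...,w_s,z]. Then P lies in the ideal of ℚ(t)[w_1,...,w_s,z] generated by the elements (w_{r+1} - t^2 w_r) for r = 1, ..., s-1; equivalently, there exist polynomials f_r in the variables (w_1,...,w_{r-1}, w_{r+2},...,w_s, z) such that P = Σ_{r=1}^{s-1} (w_{r+1} - t^2 w_r) f_r. -/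

import Mathlib

/-- The balanced quantum integer `[m]_t = (t^m - t^{-m})/(t - t^{-1})` in `ℚ(t)`. -/
noncomputable def qInt (m : ℤ) : RatFunc ℚ :=
  (RatFunc.X ^ m - RatFunc.X ^ (-m)) / (RatFunc.X - RatFunc.X⁻¹)

/-- The balanced quantum factorial `[n]_t!`. -/
noncomputable def qFact : ℕ → RatFunc ℚ
  | 0 => 1
  | n + 1 => qFact n * qInt (n + 1)

/-- The balanced quantum binomial coefficient `[s choose k]_t`. -/
noncomputable def qBinom (s k : ℕ) : RatFunc ℚ :=
  qFact s / (qFact k * qFact (s - k))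

noncomputable abbrev K := RatFunc ℚ

lemma hX : (RatFunc.X : K) ≠ 0 := RatFunc.X_ne_zero

lemma Xpow_ne_one (m : ℤ) (hm : m ≠ 0) : (RatFunc.X : K)^m ≠ 1 := by
  have key : ∀ n : ℕ, n ≠ 0 → (RatFunc.X : K)^(n : ℤ) ≠ 1 := by
    intro n hn h
    rw [zpow_natCast, ← RatFunc.algebraMap_X (K := ℚ), ← map_pow,
      ← map_one (algebraMap (Polynomial ℚ) (RatFunc ℚ))] at h
    have := RatFunc.algebraMap_injective ℚ h
    have hd := congrArg Polynomial.natDegree this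
    simp [Polynomial.natDegree_X_pow] at hd
    exact hn hd
  rcases lt_or_gt_of_ne hm with h | h
  · intro hcon
    have : (RatFunc.X : K)^(-m) = 1 := by
      rw [zpow_neg, hcon, inv_one]
    exact key (-m).toNat (by omega) (by rwa [Int.toNat_of_nonneg (by omega)])
  · intro hcon
    exact key m.toNat (by omega) (by rwa [Int.toNat_of_nonneg (by omega)])

lemma X_sub_Xinv_ne : (RatFunc.X : K) - RatFunc.X⁻¹ ≠ 0 := by
  intro h
  have h1 : (RatFunc.X : K) = RatFunc.X⁻¹ := sub_eq_zero.mp h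
  have h2 : (RatFunc.X : K)^(2:ℤ) = 1 := by
    rw [zpow_two]; nth_rewrite 2 [h1]; exact mul_inv_cancel₀ hX
  exact Xpow_ne_one 2 (by norm_num) h2

lemma qInt_ne_zero (m : ℤ) (hm : m ≠ 0) : qInt m ≠ 0 := by
  unfold qInt
  apply div_ne_zero _ X_sub_Xinv_ne
  intro h
  have h1 : (RatFunc.X : K)^m = RatFunc.X^(-m) := sub_eq_zero.mp (by linear_combination h)
  have h2 : (RatFunc.X : K)^(2*m) = 1 := by
    rw [two_mul, zpow_add₀ hX]; nth_rewrite 1 [h1]; rw [← zpow_add₀ hX]; simp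
  exact Xpow_ne_one (2*m) (by omega) h2

lemma qFact_ne_zero (n : ℕ) : qFact n ≠ 0 := by
  induction n with
  | zero => simp [qFact]
  | succ n ih => exact mul_ne_zero ih (qInt_ne_zero _ (by omega))

lemma qInt_split (n k : ℕ) (hk : k ≤ n + 1) :
    qInt (n+1) = RatFunc.X^((n:ℤ)+1-k) * qInt k + RatFunc.X^(-(k:ℤ)) * qInt ((n+1-k : ℕ) : ℤ) := by
  have e : ((n+1-k:ℕ):ℤ) = (n:ℤ)+1-k := by push_cast; omega
  rw [e]
  unfold qInt
  rw [← mul_div_assoc, ← mul_div_assoc, ← add_div]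
  congr 1
  rw [mul_sub, mul_sub, ← zpow_add₀ hX, ← zpow_add₀ hX, ← zpow_add₀ hX, ← zpow_add₀ hX]
  have e1 : (n:ℤ)+1-k + k = (n:ℤ)+1 := by ring
  have e2 : (n:ℤ)+1-k + -(k:ℤ) = (n:ℤ)+1-2*k := by ring
  have e3 : -(k:ℤ) + ((n:ℤ)+1-k) = (n:ℤ)+1-2*k := by ring
  have e4 : -(k:ℤ) + -((n:ℤ)+1-k) = -((n:ℤ)+1) := by ring
  rw [e1, e2, e3, e4]
  ring

lemma qBinom_pascal (n k : ℕ) (h1 : 1 ≤ k) (h2 : k ≤ n) :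
    qBinom (n+1) k =
      RatFunc.X^(-(k:ℤ)) * qBinom n k + RatFunc.X^((n:ℤ)+1-k) * qBinom n (k-1) := by
  have hfk : qFact k = qFact (k-1) * qInt k := by
    conv_lhs => rw [show k = (k-1)+1 by omega]
    rw [qFact]
    congr 1
    congr 1
    push_cast [show k - 1 + 1 = k by omega]
    omega
  have hfnk : qFact (n+1-k) = qFact (n-k) * qInt (((n+1-k:ℕ)):ℤ) := by
    conv_lhs => rw [show n+1-k = (n-k)+1 by omega]
    rw [qFact]
    congr 1
    congr 1
    push_cast
    omega
  unfold qBinom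
  rw [show n+1 - k = n+1-k from rfl, show n - (k-1) = n+1-k by omega]
  rw [qFact, qInt_split n k (by omega), hfk, hfnk]
  set F := qFact n with hF
  set a := qFact (k-1) with ha
  set b := qFact (n-k) with hb
  set A := qInt (k:ℤ) with hA
  set B := qInt ((n+1-k:ℕ):ℤ) with hB
  have h1 := qFact_ne_zero (k-1)
  have h2 := qFact_ne_zero (n-k)
  have h3 := qInt_ne_zero (k:ℤ) (by omega)
  have h4 := qInt_ne_zero ((n+1-k:ℕ):ℤ) (by omega)
  rw [← ha, ← hb, ← hA, ← hB] at *
  have hD : (a*A)*(b*B) ≠ 0 := mul_ne_zero (mul_ne_zero h1 h3) (mul_ne_zero h2 h4)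
  have r1 : RatFunc.X^(-(k:ℤ)) * (F/((a*A)*b)) = (RatFunc.X^(-(k:ℤ))*F*B)/((a*A)*(b*B)) := by
    rw [mul_div_assoc', div_eq_div_iff (mul_ne_zero (mul_ne_zero h1 h3) h2) hD]
    ring
  have r2 : RatFunc.X^((n:ℤ)+1-k) * (F/(a*(b*B))) = (RatFunc.X^((n:ℤ)+1-k)*F*A)/((a*A)*(b*B)) := by
    rw [mul_div_assoc', div_eq_div_iff (mul_ne_zero h1 (mul_ne_zero h2 h4)) hD]
    ring
  rw [r1, r2, ← add_div]
  congr 1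
  ring

lemma qBinom_zero (m : ℕ) : qBinom m 0 = 1 := by
  simp [qBinom, qFact, div_self (qFact_ne_zero m)]

lemma qBinom_self (m : ℕ) : qBinom m m = 1 := by
  simp [qBinom, qFact, Nat.sub_self, div_self (qFact_ne_zero m)]

lemma gauss (s : ℕ) (x : K) :
    ∑ k ∈ Finset.range (s+1),
      ((-1:K)^k * qBinom s k * RatFunc.X^((k:ℤ)*((s:ℤ)-1)) * x^k)
      = ∏ i ∈ Finset.range s, (1 - RatFunc.X^(2*(i:ℤ)) * x) := by
  induction s with
  | zero => simp [qBinom, qFact]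
  | succ s ih =>
    have step : ∀ k ∈ Finset.range (s+1+1),
        (-1:K)^k * qBinom (s+1) k * RatFunc.X^((k:ℤ)*(((s+1:ℕ):ℤ)-1)) * x^k
        = (if k ≤ s then (-1:K)^k * qBinom s k * RatFunc.X^((k:ℤ)*((s:ℤ)-1)) * x^k else 0)
          + (-(RatFunc.X^(2*(s:ℤ))*x)) *
            (if 1 ≤ k then
              (-1:K)^(k-1) * qBinom s (k-1) * RatFunc.X^(((k-1:ℕ):ℤ)*((s:ℤ)-1)) * x^(k-1)
            else 0) := by
      intro k hk
      simp only [Finset.mem_range] at hk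
      rcases Nat.eq_zero_or_pos k with hk0 | hk1
      · subst hk0
        norm_num [qBinom_zero]
      · obtain ⟨j, rfl⟩ : ∃ j, k = j + 1 := ⟨k - 1, by omega⟩
        rw [if_pos (by omega : 1 ≤ j + 1)]
        simp only [Nat.add_sub_cancel]
        rcases Nat.lt_or_ge j s with hjs | hjs
        · rw [if_pos (by omega : j + 1 ≤ s)]
          rw [qBinom_pascal s (j+1) (by omega) (by omega)]
          simp only [Nat.add_sub_cancel]
          have m1 : (RatFunc.X:K)^(-((j+1:ℕ):ℤ)) * RatFunc.X^(((j+1:ℕ):ℤ)*(((s+1:ℕ):ℤ)-1))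
              = RatFunc.X^(((j+1:ℕ):ℤ)*((s:ℤ)-1)) := by
            rw [← zpow_add₀ hX]; congr 1; push_cast; ring
          have m2 : (RatFunc.X:K)^((s:ℤ)+1-((j+1:ℕ):ℤ)) * RatFunc.X^(((j+1:ℕ):ℤ)*(((s+1:ℕ):ℤ)-1))
              = RatFunc.X^(2*(s:ℤ)) * RatFunc.X^(((j:ℕ):ℤ)*((s:ℤ)-1)) := by
            rw [← zpow_add₀ hX, ← zpow_add₀ hX]; congr 1; push_cast; ring
          linear_combination ((-1:K)^(j+1) * qBinom s (j+1) * x^(j+1)) * m1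
            + ((-1:K)^(j+1) * qBinom s j * x^(j+1)) * m2
        · have hjz : j = s := by omega
          subst hjz
          rw [if_neg (by omega : ¬ (j + 1 ≤ j))]
          rw [qBinom_self, qBinom_self]
          have m2 : (RatFunc.X:K)^(((j+1:ℕ):ℤ)*(((j+1:ℕ):ℤ)-1))
              = RatFunc.X^(2*(j:ℤ)) * RatFunc.X^(((j:ℕ):ℤ)*((j:ℤ)-1)) := by
            rw [← zpow_add₀ hX]; congr 1; push_cast; ring
          rw [m2]; ring
    rw [Finset.prod_range_succ, ← ih]
    rw [Finset.sum_congr rfl step, Finset.sum_add_distrib, ← Finset.mul_sum,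
      Finset.sum_range_succ, if_neg (by omega : ¬ (s+1 ≤ s)), add_zero,
      Finset.sum_range_succ' _ (s+1)]
    rw [if_neg (by omega : ¬ (1:ℕ) ≤ 0), add_zero]
    have e1 : ∀ k ∈ Finset.range (s+1),
        (if k ≤ s then (-1:K)^k * qBinom s k * RatFunc.X^((k:ℤ)*((s:ℤ)-1)) * x^k else 0)
        = (-1:K)^k * qBinom s k * RatFunc.X^((k:ℤ)*((s:ℤ)-1)) * x^k := by
      intro k hk
      simp only [Finset.mem_range] at hk
      rw [if_pos (by omega)]
    have e2 : ∀ i ∈ Finset.range (s+1),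
        (if 1 ≤ i+1 then
          (-1:K)^(i+1-1) * qBinom s (i+1-1) * RatFunc.X^(((i+1-1:ℕ):ℤ)*((s:ℤ)-1)) * x^(i+1-1)
        else 0)
        = (-1:K)^i * qBinom s i * RatFunc.X^((i:ℤ)*((s:ℤ)-1)) * x^i := by
      intro i hi
      rw [if_pos (by omega)]
      simp only [Nat.add_sub_cancel]
    rw [Finset.sum_congr rfl e1, Finset.sum_congr rfl e2]
    ring

lemma starstar (s m : ℕ) (hm : m < s) :
    ∑ k ∈ Finset.range (s+1), (-1:K)^k * qBinom s k
      * RatFunc.X^(((s:ℤ)-1)*((s:ℤ)-(k:ℤ)) + 2*(k:ℤ)*(m:ℤ)) = 0 := by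
  have hp : ∀ (a : ℤ) (k : ℕ), ((RatFunc.X:K)^a)^k = RatFunc.X^(a*(k:ℤ)) := by
    intro a k
    rw [← zpow_natCast ((RatFunc.X:K)^a) k, ← zpow_mul]
  have key := gauss s (RatFunc.X^(2*((m:ℤ)+1-(s:ℤ))))
  have hzero : ∏ i ∈ Finset.range s,
      (1 - (RatFunc.X:K)^(2*(i:ℤ)) * RatFunc.X^(2*((m:ℤ)+1-(s:ℤ)))) = 0 := by
    apply Finset.prod_eq_zero (Finset.mem_range.mpr (show s-1-m < s by omega))
    rw [← zpow_add₀ hX]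
    rw [show 2*(((s-1-m:ℕ):ℕ):ℤ) + 2*((m:ℤ)+1-(s:ℤ)) = 0 by push_cast; omega]
    simp
  rw [hzero] at key
  calc ∑ k ∈ Finset.range (s+1), (-1:K)^k * qBinom s k
      * RatFunc.X^(((s:ℤ)-1)*((s:ℤ)-(k:ℤ)) + 2*(k:ℤ)*(m:ℤ))
      = RatFunc.X^((s:ℤ)*((s:ℤ)-1)) * ∑ k ∈ Finset.range (s+1),
        ((-1:K)^k * qBinom s k * RatFunc.X^((k:ℤ)*((s:ℤ)-1))
          * (RatFunc.X^(2*((m:ℤ)+1-(s:ℤ))))^k) := by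
        rw [Finset.mul_sum]
        apply Finset.sum_congr rfl
        intro k hk
        rw [hp]
        have hmerge : (RatFunc.X:K)^((s:ℤ)*((s:ℤ)-1)) *
            ((RatFunc.X:K)^((k:ℤ)*((s:ℤ)-1)) * RatFunc.X^(2*((m:ℤ)+1-(s:ℤ))*(k:ℤ)))
            = RatFunc.X^(((s:ℤ)-1)*((s:ℤ)-(k:ℤ)) + 2*(k:ℤ)*(m:ℤ)) := by
          rw [← zpow_add₀ hX, ← zpow_add₀ hX]
          congr 1
          ring
        linear_combination (-((-1:K)^k * qBinom s k)) * hmerge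
    _ = 0 := by rw [key, mul_zero]

lemma hp : ∀ (a : ℤ) (k : ℕ), ((RatFunc.X:K)^a)^k = RatFunc.X^(a*(k:ℤ)) := by
  intro a k
  rw [← zpow_natCast ((RatFunc.X:K)^a) k, ← zpow_mul]

section Main
variable {A : Type*} [CommRing A] [Algebra (RatFunc ℚ) A]

lemma main_id (s : ℕ) (hs : 1 ≤ s) (w z : A) :
    ∑ k ∈ Finset.range (s+1),
      algebraMap K A ((-1:K)^k * qBinom s k) *
        ∏ j : Fin s,
          (if (j:ℕ) < k then
            algebraMap K A (RatFunc.X^(2*((j:ℕ):ℤ))) * w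
              - algebraMap K A (RatFunc.X^(1-(s:ℤ))) * z
          else
            algebraMap K A (RatFunc.X^(1-(s:ℤ)))
              * (algebraMap K A (RatFunc.X^(2*((j:ℕ):ℤ))) * w) - z)
      = 0 := by
  set α := algebraMap K A with hα
  set y := α (RatFunc.X^(1-(s:ℤ))) * z with hy
  -- step 1 : rewrite each summand
  have prodstep : ∀ k ∈ Finset.range (s+1),
      (α ((-1:K)^k * qBinom s k) * ∏ j : Fin s,
        (if (j:ℕ) < k then
          α (RatFunc.X^(2*((j:ℕ):ℤ))) * w - y
        else
          α (RatFunc.X^(1-(s:ℤ))) * (α (RatFunc.X^(2*((j:ℕ):ℤ))) * w) - z))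
      = α ((-1:K)^k * qBinom s k * RatFunc.X^(((s:ℤ)-1)*((s:ℤ)-(k:ℤ)))) *
          ((w - y) * ∏ i ∈ Finset.range (s-1),
            (α (RatFunc.X^(2*((k:ℤ)+1+(i:ℤ)-(s:ℤ)))) * w - y)) := by
    intro k hk
    simp only [Finset.mem_range] at hk
    have hks : k ≤ s := by omega
    -- convert Fin-product to range-product
    rw [Fin.prod_univ_eq_prod_range (fun j : ℕ => if j < k then
          α (RatFunc.X^(2*(j:ℤ))) * w - y
        else
          α (RatFunc.X^(1-(s:ℤ))) * (α (RatFunc.X^(2*(j:ℤ))) * w) - z) s]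
    have hsplit := Finset.prod_range_add (fun j : ℕ => if j < k then
          α (RatFunc.X^(2*(j:ℤ))) * w - y
        else
          α (RatFunc.X^(1-(s:ℤ))) * (α (RatFunc.X^(2*(j:ℤ))) * w) - z) k (s-k)
    rw [show k + (s-k) = s by omega] at hsplit
    rw [hsplit]
    have l1 : ∏ j ∈ Finset.range k, (if j < k then
          α (RatFunc.X^(2*(j:ℤ))) * w - y
        else
          α (RatFunc.X^(1-(s:ℤ))) * (α (RatFunc.X^(2*(j:ℤ))) * w) - z)
        = ∏ j ∈ Finset.range k, (α (RatFunc.X^(2*(j:ℤ))) * w - y) := by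
      apply Finset.prod_congr rfl
      intro j hj
      rw [if_pos (Finset.mem_range.mp hj)]
    have l2 : ∏ i ∈ Finset.range (s-k), (if k + i < k then
          α (RatFunc.X^(2*((k+i:ℕ):ℤ))) * w - y
        else
          α (RatFunc.X^(1-(s:ℤ))) * (α (RatFunc.X^(2*((k+i:ℕ):ℤ))) * w) - z)
        = ∏ i ∈ Finset.range (s-k),
            (α (RatFunc.X^((s:ℤ)-1)) * (α (RatFunc.X^(2*((k:ℤ)+(i:ℤ)+1-(s:ℤ)))) * w - y)) := by
      apply Finset.prod_congr rfl
      intro i hi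
      rw [if_neg (by omega)]
      have e0 : α (RatFunc.X^(1-(s:ℤ))) * (α (RatFunc.X^(2*((k+i:ℕ):ℤ))) * w)
          = α (RatFunc.X^(1-(s:ℤ)+2*((k+i:ℕ):ℤ))) * w := by
        rw [← mul_assoc, ← map_mul, ← zpow_add₀ hX]
      have e1 : α (RatFunc.X^((s:ℤ)-1)) * (α (RatFunc.X^(2*((k:ℤ)+(i:ℤ)+1-(s:ℤ)))) * w)
          = α (RatFunc.X^(1-(s:ℤ)+2*((k+i:ℕ):ℤ))) * w := by
        rw [← mul_assoc, ← map_mul, ← zpow_add₀ hX,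
          show (s:ℤ)-1+2*((k:ℤ)+(i:ℤ)+1-(s:ℤ)) = 1-(s:ℤ)+2*((k+i:ℕ):ℤ) by push_cast; ring]
      have e2 : α (RatFunc.X^((s:ℤ)-1)) * (α (RatFunc.X^(1-(s:ℤ))) * z) = z := by
        rw [← mul_assoc, ← map_mul, ← zpow_add₀ hX,
          show (s:ℤ)-1+(1-(s:ℤ)) = 0 by ring, zpow_zero, map_one, one_mul]
      rw [hy, mul_sub, e0, e1, e2]
    rw [l1, l2, Finset.prod_mul_distrib, Finset.prod_const, Finset.card_range]
    have l3 : (α (RatFunc.X^((s:ℤ)-1)))^(s-k) = α (RatFunc.X^(((s:ℤ)-1)*((s:ℤ)-(k:ℤ)))) := by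
      rw [← map_pow, hp]
      congr 2
      push_cast [Nat.cast_sub hks]
      ring
    rw [l3]
    have combine : (∏ j ∈ Finset.range k, (α (RatFunc.X^(2*(j:ℤ))) * w - y)) *
        ∏ i ∈ Finset.range (s-k), (α (RatFunc.X^(2*((k:ℤ)+(i:ℤ)+1-(s:ℤ)))) * w - y)
        = (w - y) * ∏ i ∈ Finset.range (s-1),
            (α (RatFunc.X^(2*((k:ℤ)+1+(i:ℤ)-(s:ℤ)))) * w - y) := by
      rcases Nat.eq_zero_or_pos k with rfl | hk1
      · simp only [Finset.range_zero, Finset.prod_empty, one_mul, Nat.cast_zero,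
          zero_add, Nat.sub_zero, Nat.add_sub_cancel]
        obtain ⟨s', rfl⟩ : ∃ s', s = s' + 1 := ⟨s-1, by omega⟩
        rw [Finset.prod_range_succ,
          show (2*((s':ℤ)+1-((s'+1:ℕ):ℤ))) = 0 by push_cast; ring,
          zpow_zero, map_one, one_mul, mul_comm]
        congr 1
        apply Finset.prod_congr rfl
        intro i _
        rw [show (2*((i:ℤ)+1-((s'+1:ℕ):ℤ))) = 2*(1+(i:ℤ)-((s'+1:ℕ):ℤ)) by ring]
      · obtain ⟨k', rfl⟩ : ∃ k', k = k' + 1 := ⟨k-1, by omega⟩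
        rw [Finset.prod_range_succ',
          show (2*(((0:ℕ)):ℤ)) = 0 by norm_num,
          zpow_zero, map_one, one_mul]
        have hsp := Finset.prod_range_add
          (fun i : ℕ => α (RatFunc.X^(2*(((k'+1:ℕ):ℤ)+1+(i:ℤ)-(s:ℤ)))) * w - y)
          (s-(k'+1)) k'
        rw [show s-(k'+1)+k' = s-1 by omega] at hsp
        rw [hsp]
        have c1 : ∏ i ∈ Finset.range (s-(k'+1)),
              (α (RatFunc.X^(2*(((k'+1:ℕ):ℤ)+1+(i:ℤ)-(s:ℤ)))) * w - y)
            = ∏ i ∈ Finset.range (s-(k'+1)),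
              (α (RatFunc.X^(2*(((k'+1:ℕ):ℤ)+(i:ℤ)+1-(s:ℤ)))) * w - y) := by
          apply Finset.prod_congr rfl
          intro i _
          rw [show (2*(((k'+1:ℕ):ℤ)+1+(i:ℤ)-(s:ℤ))) = 2*(((k'+1:ℕ):ℤ)+(i:ℤ)+1-(s:ℤ)) by ring]
        have c2 : ∏ i ∈ Finset.range k',
              (α (RatFunc.X^(2*(((k'+1:ℕ):ℤ)+1+((s-(k'+1)+i:ℕ):ℤ)-(s:ℤ)))) * w - y)
            = ∏ i ∈ Finset.range k',
              (α (RatFunc.X^(2*(((i+1:ℕ):ℤ)))) * w - y) := by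
          apply Finset.prod_congr rfl
          intro i _
          rw [show (2*(((k'+1:ℕ):ℤ)+1+((s-(k'+1)+i:ℕ):ℤ)-(s:ℤ))) = 2*(((i+1:ℕ):ℤ)) by omega]
        rw [c1, c2]
        ring
    rw [map_mul α ((-1:K)^k * qBinom s k) (RatFunc.X^(((s:ℤ)-1)*((s:ℤ)-(k:ℤ))))]
    linear_combination (α ((-1:K)^k * qBinom s k)
      * α (RatFunc.X^(((s:ℤ)-1)*((s:ℤ)-(k:ℤ))))) * combine
  rw [Finset.sum_congr rfl prodstep]
  -- step 2 : polynomial expansion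
  set G : Polynomial A := ∏ i ∈ Finset.range (s-1),
    (Polynomial.C (α (RatFunc.X^(2*((i:ℤ)+1-(s:ℤ)))) * w) * Polynomial.X - Polynomial.C y) with hG
  have hGdeg : G.natDegree < s := by
    have h1 : G.natDegree ≤ ∑ i ∈ Finset.range (s-1), 1 := by
      rw [hG]
      refine le_trans (Polynomial.natDegree_prod_le _ _) (Finset.sum_le_sum ?_)
      intro i _
      refine le_trans (Polynomial.natDegree_sub_le _ _) ?_
      refine max_le (le_trans (Polynomial.natDegree_C_mul_le _ _) ?_) ?_
      · exact Polynomial.natDegree_X_le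
      · exact le_trans (le_of_eq (Polynomial.natDegree_C _)) (by omega)
    simp only [Finset.sum_const, Finset.card_range, smul_eq_mul, mul_one] at h1
    omega
  have hGeval : ∀ k : ℕ,
      (∏ i ∈ Finset.range (s-1), (α (RatFunc.X^(2*((k:ℤ)+1+(i:ℤ)-(s:ℤ)))) * w - y))
      = G.eval (α (RatFunc.X^(2*(k:ℤ)))) := by
    intro k
    rw [hG, Polynomial.eval_prod]
    apply Finset.prod_congr rfl
    intro i _
    simp only [Polynomial.eval_sub, Polynomial.eval_mul, Polynomial.eval_C, Polynomial.eval_X]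
    congr 1
    rw [mul_right_comm, ← map_mul, ← zpow_add₀ hX]
    congr 2
    ring
  have sumstep : ∀ k ∈ Finset.range (s+1),
      α ((-1:K)^k * qBinom s k * RatFunc.X^(((s:ℤ)-1)*((s:ℤ)-(k:ℤ)))) *
        ((w - y) * ∏ i ∈ Finset.range (s-1),
          (α (RatFunc.X^(2*((k:ℤ)+1+(i:ℤ)-(s:ℤ)))) * w - y))
      = ∑ m ∈ Finset.range s, ((w - y) * G.coeff m) *
          α ((-1:K)^k * qBinom s k
            * RatFunc.X^(((s:ℤ)-1)*((s:ℤ)-(k:ℤ)) + 2*(k:ℤ)*(m:ℤ))) := by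
    intro k hk
    rw [hGeval k, Polynomial.eval_eq_sum_range' hGdeg, Finset.mul_sum, Finset.mul_sum]
    apply Finset.sum_congr rfl
    intro m hm
    rw [← map_pow, hp]
    have hmerge : α ((-1:K)^k * qBinom s k * RatFunc.X^(((s:ℤ)-1)*((s:ℤ)-(k:ℤ))))
        * α (RatFunc.X^(2*(k:ℤ)*(m:ℤ)))
        = α ((-1:K)^k * qBinom s k
            * RatFunc.X^(((s:ℤ)-1)*((s:ℤ)-(k:ℤ)) + 2*(k:ℤ)*(m:ℤ))) := by
      rw [← map_mul]
      congr 1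
      rw [mul_assoc, ← zpow_add₀ hX]
    linear_combination ((w - y) * G.coeff m) * hmerge
  rw [Finset.sum_congr rfl sumstep, Finset.sum_comm]
  apply Finset.sum_eq_zero
  intro m hm
  rw [← Finset.mul_sum, ← map_sum, starstar s m (Finset.mem_range.mp hm), map_zero, mul_zero]

end Main

set_option maxHeartbeats 2000000 in
/-- Lemma "techun": the polynomial
`P(w_1,...,w_s,z) = Σ_{k=0}^s (-1)^k [s choose k]_t
   (w_1 - t^{1-s}z)···(w_k - t^{1-s}z)·(w_{k+1}t^{1-s} - z)···(w_s t^{1-s} - z)`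
lies in the ideal of `ℚ(t)[w_1,...,w_s,z]` generated by the `w_{r+1} - t^2 w_r`,
`r = 1, ..., s-1`.  Here the variables are indexed by `Option (Fin s)`, with
`some j` corresponding to `w_{j+1}` and `none` to `z`. -/
theorem P_mem_ideal (s : ℕ) (hs : 1 ≤ s) :
    (∑ k ∈ Finset.range (s + 1),
        MvPolynomial.C ((-1 : RatFunc ℚ) ^ k * qBinom s k) *
          ∏ j : Fin s,
            if (j : ℕ) < k then
              MvPolynomial.X (some j) -
                MvPolynomial.C (RatFunc.X ^ (1 - (s : ℤ))) * MvPolynomial.X none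
            else
              MvPolynomial.C (RatFunc.X ^ (1 - (s : ℤ))) * MvPolynomial.X (some j) -
                MvPolynomial.X none) ∈
      Ideal.span (Set.range fun r : {r : ℕ // r + 1 < s} =>
        (MvPolynomial.X (some ⟨r.1 + 1, r.2⟩) : MvPolynomial (Option (Fin s)) (RatFunc ℚ)) -
          MvPolynomial.C (RatFunc.X ^ 2) * MvPolynomial.X (some ⟨r.1, Nat.lt_of_succ_lt r.2⟩)) := by
    classical
  have h0 : 0 < s := hs
  set I := Ideal.span (Set.range fun r : {r : ℕ // r + 1 < s} =>
      (MvPolynomial.X (some ⟨r.1 + 1, r.2⟩) : MvPolynomial (Option (Fin s)) (RatFunc ℚ)) -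
        MvPolynomial.C (RatFunc.X ^ 2) * MvPolynomial.X (some ⟨r.1, Nat.lt_of_succ_lt r.2⟩))
    with hI
  set g : Option (Fin s) → MvPolynomial (Option (Fin s)) (RatFunc ℚ) := fun o =>
    Option.rec (MvPolynomial.X none)
      (fun j => MvPolynomial.C ((RatFunc.X : RatFunc ℚ)^(2*((j:ℕ):ℤ)))
        * MvPolynomial.X (some ⟨0, h0⟩)) o with hg
  set φ := MvPolynomial.aeval (R := RatFunc ℚ) g with hφ
  have mem1 : ∀ (n : ℕ) (hn : n < s),
      (MvPolynomial.X (some ⟨n, hn⟩) : MvPolynomial (Option (Fin s)) (RatFunc ℚ))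
        - MvPolynomial.C ((RatFunc.X : RatFunc ℚ)^(2*(n:ℤ))) * MvPolynomial.X (some ⟨0, h0⟩)
        ∈ I := by
    intro n
    induction n with
    | zero =>
      intro hn
      norm_num
    | succ n ih =>
      intro hn
      have hgen : (MvPolynomial.X (some ⟨n+1, hn⟩) : MvPolynomial (Option (Fin s)) (RatFunc ℚ))
          - MvPolynomial.C (RatFunc.X ^ 2) * MvPolynomial.X (some ⟨n, Nat.lt_of_succ_lt hn⟩)
          ∈ I := by
        rw [hI]
        exact Ideal.subset_span ⟨⟨n, hn⟩, rfl⟩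
      have e := I.add_mem hgen
        (I.mul_mem_left (MvPolynomial.C (RatFunc.X ^ 2)) (ih (Nat.lt_of_succ_lt hn)))
      have cmul : (MvPolynomial.C (RatFunc.X ^ 2) : MvPolynomial (Option (Fin s)) (RatFunc ℚ))
          * MvPolynomial.C ((RatFunc.X : RatFunc ℚ)^(2*(n:ℤ)))
          = MvPolynomial.C ((RatFunc.X : RatFunc ℚ)^(2*((n+1:ℕ):ℤ))) := by
        rw [← map_mul]
        congr 1
        rw [show ((RatFunc.X : RatFunc ℚ) ^ 2) = (RatFunc.X : RatFunc ℚ)^((2:ℕ):ℤ) by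
          rw [zpow_natCast], ← zpow_add₀ hX]
        congr 1
        push_cast
        ring
      have eq1 : (MvPolynomial.X (some ⟨n+1, hn⟩) : MvPolynomial (Option (Fin s)) (RatFunc ℚ))
          - MvPolynomial.C ((RatFunc.X : RatFunc ℚ)^(2*((n+1:ℕ):ℤ)))
            * MvPolynomial.X (some ⟨0, h0⟩)
          = (MvPolynomial.X (some ⟨n+1, hn⟩)
              - MvPolynomial.C (RatFunc.X ^ 2) * MvPolynomial.X (some ⟨n, Nat.lt_of_succ_lt hn⟩))
            + MvPolynomial.C (RatFunc.X ^ 2)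
              * (MvPolynomial.X (some ⟨n, Nat.lt_of_succ_lt hn⟩)
                - MvPolynomial.C ((RatFunc.X : RatFunc ℚ)^(2*(n:ℤ)))
                  * MvPolynomial.X (some ⟨0, h0⟩)) := by
        rw [← cmul]
        ring
      rw [eq1]
      exact e
  have sub_mem : ∀ p : MvPolynomial (Option (Fin s)) (RatFunc ℚ), p - φ p ∈ I := by
    intro p
    induction p using MvPolynomial.induction_on with
    | C a =>
      rw [hφ, MvPolynomial.aeval_C, MvPolynomial.algebraMap_eq, sub_self]
      exact zero_mem I
    | add p q hp hq =>
      have : (p + q) - φ (p + q) = (p - φ p) + (q - φ q) := by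
        rw [map_add]; ring
      rw [this]
      exact I.add_mem hp hq
    | mul_X p i hp =>
      have hXi : MvPolynomial.X i - φ (MvPolynomial.X i) ∈ I := by
        rw [hφ, MvPolynomial.aeval_X]
        cases i with
        | none => rw [hg]; rw [sub_self]; exact zero_mem I
        | some j =>
          show MvPolynomial.X (some j)
            - MvPolynomial.C ((RatFunc.X : RatFunc ℚ)^(2*((j:ℕ):ℤ)))
              * MvPolynomial.X (some ⟨0, h0⟩) ∈ I
          exact mem1 j.1 j.2
      have eq2 : p * MvPolynomial.X i - φ (p * MvPolynomial.X i)
          = p * (MvPolynomial.X i - φ (MvPolynomial.X i)) + φ (MvPolynomial.X i) * (p - φ p) := by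
        rw [map_mul]; ring
      rw [eq2]
      exact I.add_mem (I.mul_mem_left _ hXi) (I.mul_mem_left _ hp)
  have key := main_id (A := MvPolynomial (Option (Fin s)) (RatFunc ℚ)) s hs
    (MvPolynomial.X (some ⟨0, h0⟩)) (MvPolynomial.X none)
  have hφP : φ (∑ k ∈ Finset.range (s + 1),
      MvPolynomial.C ((-1 : RatFunc ℚ) ^ k * qBinom s k) *
        ∏ j : Fin s,
          if (j : ℕ) < k then
            MvPolynomial.X (some j) -
              MvPolynomial.C (RatFunc.X ^ (1 - (s : ℤ))) * MvPolynomial.X none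
          else
            MvPolynomial.C (RatFunc.X ^ (1 - (s : ℤ))) * MvPolynomial.X (some j) -
              MvPolynomial.X none) = 0 := by
    rw [map_sum, ← key]
    apply Finset.sum_congr rfl
    intro k hk
    rw [map_mul, map_prod]
    congr 1
    · rw [hφ, MvPolynomial.aeval_C]
    · apply Finset.prod_congr rfl
      intro j _
      rw [apply_ite φ]
      by_cases hj : (j : ℕ) < k
      · rw [if_pos hj, if_pos hj, map_sub, map_mul, hφ, MvPolynomial.aeval_X,
          MvPolynomial.aeval_X, MvPolynomial.aeval_C, MvPolynomial.algebraMap_eq]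
      · rw [if_neg hj, if_neg hj, map_sub, map_mul, hφ, MvPolynomial.aeval_X,
          MvPolynomial.aeval_X, MvPolynomial.aeval_C, MvPolynomial.algebraMap_eq]
  have fin := sub_mem (∑ k ∈ Finset.range (s + 1),
      MvPolynomial.C ((-1 : RatFunc ℚ) ^ k * qBinom s k) *
        ∏ j : Fin s,
          if (j : ℕ) < k then
            MvPolynomial.X (some j) -
              MvPolynomial.C (RatFunc.X ^ (1 - (s : ℤ))) * MvPolynomial.X none
          else
            MvPolynomial.C (RatFunc.X ^ (1 - (s : ℤ))) * MvPolynomial.X (some j) -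
              MvPolynomial.X none)
  rwa [hφP, sub_zero] at fin
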